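/- arXiv:2409.03699 — 6 statements merged into one kernel-verified Lean document; each statement's English description precedes it below -/
import Mathlib

section
/- Let k ≥ 3 be an integer and let P = (C, A) be the palette with C = ℤ/(k−1)ℤ and A = {(x, y, z) ∈ C³ : x ≠ y, y ≠ z, and z ≠ x + 1 in ℤ/(k−1)ℤ}. Then the k-star S_k does not admit P. -/
/-!
Order the vertices and colour the pairs of `S_k` admissibly. Label each leaf `v` by the colour
of its pair with the centre `u`, plus `1` when `v` precedes `u`. For two leaves `a ≺ b`, the
three positions of `u` relative to them are excluded by the three conditions of the palette
(`x ≠ y` if `u ≺ a`, `z ≠ x + 1` if `a ≺ u ≺ b`, `y ≠ z` if `b ≺ u`), so the labels of the `k`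
leaves are pairwise distinct, which is impossible in `ℤ/(k−1)ℤ`.
-/

/-- A 3-graph, given by its edge set `E` on vertex type `V`, admits the palette
with color set `C` and admissible triples `A` if there are a linear (strict total)
order on the vertices and a coloring of the unordered pairs of vertices such that
every edge, listed in increasing order, receives an admissible triple. -/
def AdmitsPalette {V α : Type} [DecidableEq V] (E : Set (Finset V))
    (C : Set α) (A : Set (α × α × α)) : Prop :=
  ∃ r : V → V → Prop, IsStrictTotalOrder V r ∧
    ∃ φ : Sym2 V → α, (∀ p, φ p ∈ C) ∧
      ∀ u v w : V, r u v → r v w → ({u, v, w} : Finset V) ∈ E →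
        (φ s(u, v), φ s(u, w), φ s(v, w)) ∈ A

/-- The edge set of the `k`-star `S_k`: vertices `0, 1, …, k` where `0` plays the
role of the center `u`, and `i.succ` that of `v_i`; edges are `{u, v_i, v_j}`. -/
def starEdges (k : ℕ) : Set (Finset (Fin (k + 1))) :=
  {e | ∃ i j : Fin k, i ≠ j ∧ e = {0, i.succ, j.succ}}

def shiftPalette {α : Type} (σ : α → α) : Set (α × α × α) :=
  {t | t.1 ≠ t.2.1 ∧ t.2.1 ≠ t.2.2 ∧ t.2.2 ≠ σ t.1}

section StarLabel

variable {V α : Type} (r : V → V → Prop) [IsStrictTotalOrder V r]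
  (φ : Sym2 V → α) (σ : α → α) (c : V)

open Classical in
noncomputable def starLabel (v : V) : α :=
  if r c v then φ s(c, v) else σ (φ s(c, v))

variable {r φ σ c}

theorem starLabel_ne_of_lt (hσ : σ.Injective)
    (hφ : ∀ u v w, r u v → r v w → (c = u ∨ c = v ∨ c = w) →
      (φ s(u, v), φ s(u, w), φ s(v, w)) ∈ shiftPalette σ)
    {a b : V} (hab : r a b) (ha : a ≠ c) (hb : b ≠ c) :
    starLabel r φ σ c a ≠ starLabel r φ σ c b := by
  unfold starLabel
  rcases trichotomous_of r c a with hca | rfl | hac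
  · have hcb : r c b := trans_of r hca hab
    rw [if_pos hca, if_pos hcb]
    exact (hφ c a b hca hab (Or.inl rfl)).1
  · exact absurd rfl ha
  rw [if_neg (asymm_of r hac)]
  rcases trichotomous_of r c b with hcb | rfl | hbc
  · rw [if_pos hcb, Sym2.eq_swap (a := c)]
    exact (hφ a c b hac hcb (Or.inr (Or.inl rfl))).2.2.symm
  · exact absurd rfl hb
  · rw [if_neg (asymm_of r hbc), Sym2.eq_swap (a := c), Sym2.eq_swap (a := c)]
    exact hσ.ne (hφ a b c hab hbc (Or.inr (Or.inr rfl))).2.1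

theorem starLabel_injOn (hσ : σ.Injective)
    (hφ : ∀ u v w, r u v → r v w → (c = u ∨ c = v ∨ c = w) →
      (φ s(u, v), φ s(u, w), φ s(v, w)) ∈ shiftPalette σ) :
    Set.InjOn (starLabel r φ σ c) {v | v ≠ c} := by
  intro a ha b hb hlabel
  by_contra hne
  rcases trichotomous_of r a b with hab | hab | hba
  · exact starLabel_ne_of_lt hσ hφ hab ha hb hlabel
  · exact hne hab
  · exact starLabel_ne_of_lt hσ hφ hba hb ha hlabel.symm

end StarLabel

theorem mem_starEdges_of_zero_mem {k : ℕ} {u v w : Fin (k + 1)}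
    (huv : u ≠ v) (hvw : v ≠ w) (huw : u ≠ w) (h0 : 0 = u ∨ 0 = v ∨ 0 = w) :
    ({u, v, w} : Finset (Fin (k + 1))) ∈ starEdges k := by
  have h_of_zero : ∀ {a b : Fin (k + 1)}, a ≠ 0 → b ≠ 0 → a ≠ b →
      ({0, a, b} : Finset (Fin (k + 1))) ∈ starEdges k := by
    intro a b ha hb hab
    obtain ⟨i, rfl⟩ := Fin.exists_succ_eq.mpr ha
    obtain ⟨j, rfl⟩ := Fin.exists_succ_eq.mpr hb
    exact ⟨i, j, fun h => hab (congrArg Fin.succ h), rfl⟩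
  rcases h0 with rfl | rfl | rfl
  · exact h_of_zero huv.symm huw.symm hvw
  · rw [Finset.insert_comm]
    exact h_of_zero huv hvw.symm huw
  · convert h_of_zero huw hvw huv using 1
    ext x
    simp only [Finset.mem_insert, Finset.mem_singleton]
    tauto

theorem card_le_of_admitsPalette_starEdges {α : Type} [Fintype α] {k : ℕ} {C : Set α}
    {σ : α → α} (hσ : σ.Injective)
    (h : AdmitsPalette (starEdges k) C (shiftPalette σ)) :
    k ≤ Fintype.card α := by
  obtain ⟨r, hr, φ, -, hE⟩ := h
  have hinj : Set.InjOn (starLabel r φ σ 0) {v | v ≠ 0} :=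
    starLabel_injOn hσ fun u v w huv hvw h0 =>
      hE u v w huv hvw <| mem_starEdges_of_zero_mem (ne_of_irrefl huv) (ne_of_irrefl hvw)
        (ne_of_irrefl (trans_of r huv hvw)) h0
  have hleaves : Function.Injective fun i : Fin k => starLabel r φ σ 0 i.succ :=
    fun i j hij => Fin.succ_injective _ (hinj (Fin.succ_ne_zero i) (Fin.succ_ne_zero j) hij)
  simpa using Fintype.card_le_of_injective _ hleaves

/-- For `k ≥ 3`, the `k`-star does not admit the palette on `ℤ/(k−1)ℤ` whose
admissible triples are those `(x, y, z)` with `x ≠ y`, `y ≠ z` and `z ≠ x + 1`. -/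
theorem star_not_admits_mod_palette (k : ℕ) (hk : 3 ≤ k) :
    ¬ AdmitsPalette (starEdges k) (Set.univ : Set (ZMod (k - 1)))
      {t : ZMod (k - 1) × ZMod (k - 1) × ZMod (k - 1) |
        t.1 ≠ t.2.1 ∧ t.2.1 ≠ t.2.2 ∧ t.2.2 ≠ t.1 + 1} := by
  intro h
  have : NeZero (k - 1) := ⟨by omega⟩
  have hcard := card_le_of_admitsPalette_starEdges (σ := (· + 1)) (add_left_injective 1) h
  rw [ZMod.card] at hcard
  omega
end

section
/- Let P = (C, A) be a palette with |C| = n, let a ∈ C be a color, and suppose that the palette obtained from P by removing the color a, namely (C∖{a}, A ∩ (C∖{a})³), has density at most d(P) (i.e., |A ∩ (C∖{a})³| ≤ (n−1)³·d(P)). Then for all i ≠ j in {1,2,3}, e_{i,j}(a) ≥ 3·d(P) − 2, i.e., d_{i,j}(a) ≥ (3·d(P) − 2)·n. -/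
/-- A palette: a finite nonempty set of colors together with a set of
admissible ordered triples of colors. -/
structure Palette (α : Type) [DecidableEq α] where
  colors : Finset α
  nonempty : colors.Nonempty
  triples : Finset (α × α × α)
  triples_sub : triples ⊆ colors ×ˢ colors ×ˢ colors

/-- The density of a palette: `|A| / |C|³`. -/
noncomputable def Palette.density {α : Type} [DecidableEq α] (P : Palette α) : ℝ :=
  (P.triples.card : ℝ) / (P.colors.card : ℝ) ^ 3

/-- The pair `(a, b)` is `(i, j)`-good if some admissible triple has `i`-th
entry `a` and `j`-th entry `b`. -/
def Palette.Good {α : Type} [DecidableEq α] (P : Palette α) (i j : Fin 3)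
    (a b : α) : Prop :=
  ∃ t ∈ P.triples, ![t.1, t.2.1, t.2.2] i = a ∧ ![t.1, t.2.1, t.2.2] j = b

instance {α : Type} [DecidableEq α] (P : Palette α) (i j : Fin 3) (a : α) :
    DecidablePred (P.Good i j a) := fun b =>
  inferInstanceAs (Decidable
    (∃ t ∈ P.triples, ![t.1, t.2.1, t.2.2] i = a ∧ ![t.1, t.2.1, t.2.2] j = b))

/-- `d_{i,j}(a)`: the number of colors `b` such that `(a, b)` is `(i, j)`-good. -/
def Palette.dGood {α : Type} [DecidableEq α] (P : Palette α) (i j : Fin 3)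
    (a : α) : ℕ :=
  (P.colors.filter fun b => P.Good i j a b).card

/-!
Split the admissible triples into those avoiding `a`, those with `a` in position `i`, and the
rest, which contain `a` but not in position `i`. A triple of the second kind is determined by its
`j`-th entry `b`, for which `(a, b)` is `(i, j)`-good, and by its third entry, so there are at most
`d_{i,j}(a) n` of them; there are at most `n³ - (n - 1)³ - n² = (n - 1)(2n - 1)` triples of the
third kind. With the hypothesis on the triples avoiding `a` this gives
`d n³ ≤ (n - 1)³ d + d_{i,j}(a) n + (n - 1)(2n - 1)`, that is,
`d_{i,j}(a) n ≥ (3d - 2) n² + (1 - d)(3n - 1) ≥ (3d - 2) n²`.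
-/

open Finset Fintype

theorem Finset.card_filter_add_card_filter_le_of_subset {β : Type*} {s t : Finset β}
    (hst : s ⊆ t) {p q : β → Prop} [DecidablePred p] [DecidablePred q] (hpq : ∀ x, p x → q x) :
    #{x ∈ s | q x} + #{x ∈ t | p x} ≤ #{x ∈ s | p x} + #{x ∈ t | q x} := by
  have hs := card_filter_add_card_filter_not (s := {x ∈ s | q x}) p
  have ht := card_filter_add_card_filter_not (s := {x ∈ t | q x}) p
  have hp : ∀ u : Finset β, {x ∈ {x ∈ u | q x} | p x} = {x ∈ u | p x} := fun u => by
    rw [filter_filter]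
    exact filter_congr fun x _ => ⟨And.right, fun h => ⟨hpq x h, h⟩⟩
  have hnp : #{x ∈ {x ∈ s | q x} | ¬p x} ≤ #{x ∈ {x ∈ t | q x} | ¬p x} :=
    card_le_card (filter_subset_filter _ (filter_subset_filter _ hst))
  rw [hp] at hs ht
  omega

section PiFinset

variable {ι α : Type*} [Fintype ι] [DecidableEq ι] [DecidableEq α] {C : Finset α} {a b : α}

lemma card_filter_piFinset_const_forall_ne :
    #{f ∈ piFinset fun _ : ι => C | ∀ k, f k ≠ a} = #(C.erase a) ^ card ι := by
  rw [← card_univ, ← prod_const, ← card_piFinset]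
  congr 1
  ext f
  simp only [mem_filter, mem_piFinset, mem_erase]
  grind

lemma card_filter_piFinset_const_apply_ne_add (i : ι) (ha : a ∈ C) :
    #{f ∈ piFinset fun _ : ι => C | f i ≠ a} + #C ^ (card ι - 1) = #C ^ card ι := by
  rw [← card_filter_piFinset_const_eq_of_mem C i ha, add_comm, card_filter_add_card_filter_not,
    card_piFinset, prod_const, card_univ]

lemma card_filter_piFinset_const_apply_eq_and_apply_eq {i j : ι} (hij : i ≠ j) (ha : a ∈ C)
    (hb : b ∈ C) : #{f ∈ piFinset fun _ : ι => C | f i = a ∧ f j = b} = #C ^ (card ι - 2) := by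
  set s : ι → Finset α := Function.update (fun _ => C) i {a}
  have hs : {f ∈ piFinset fun _ : ι => C | f i = a ∧ f j = b} = {f ∈ piFinset s | f j = b} := by
    rw [piFinset_update_singleton_eq_filter_piFinset_eq _ _ ha, filter_filter]
  have hbs : b ∈ s j := by simp [s, hij.symm, hb]
  have hsC : ∀ k ∈ (univ.erase j).erase i, #(s k) = #C := fun k hk => by
    simp [s, ne_of_mem_erase hk]
  rw [hs, card_filter_piFinset_eq_of_mem s j hbs,
    ← mul_prod_erase _ _ (mem_erase.2 ⟨hij, mem_univ i⟩), prod_congr rfl hsC, prod_const,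
    card_erase_of_mem (mem_erase.2 ⟨hij, mem_univ i⟩), card_erase_of_mem (mem_univ j), card_univ]
  simp [s, Nat.sub_sub]

variable {S : Finset (ι → α)}

lemma card_filter_apply_eq_le (hS : S ⊆ piFinset fun _ => C) {i j : ι} (hij : i ≠ j)
    (ha : a ∈ C) :
    #{f ∈ S | f i = a} ≤ #C ^ (card ι - 2) * #{b ∈ C | ∃ f ∈ S, f i = a ∧ f j = b} := by
  refine card_le_mul_card_image_of_maps_to (f := fun f => f j) ?_ _ fun b hb => ?_
  · intro f hf
    obtain ⟨hfS, hfi⟩ := mem_filter.1 hf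
    exact mem_filter.2 ⟨mem_piFinset.1 (hS hfS) j, f, hfS, hfi, rfl⟩
  · rw [← card_filter_piFinset_const_apply_eq_and_apply_eq hij ha (mem_filter.1 hb).1,
      filter_filter]
    exact card_le_card (filter_subset_filter _ hS)

-- With `n = #C` and `m = card ι`: the tuples that take the value `a`, but not at `i`, number at
-- most `n ^ m - (n - 1) ^ m - n ^ (m - 1)`; the subtracted terms are moved to the left.
theorem card_add_le_of_subset_piFinset (hS : S ⊆ piFinset fun _ => C) {i j : ι} (hij : i ≠ j)
    (ha : a ∈ C) :
    #S + #(C.erase a) ^ card ι + #C ^ (card ι - 1) ≤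
      #{f ∈ S | ∀ k, f k ≠ a} + #C ^ (card ι - 2) * #{b ∈ C | ∃ f ∈ S, f i = a ∧ f j = b} +
        #C ^ card ι := by
  have hsplit := card_filter_add_card_filter_not (s := S) (fun f => f i = a)
  have hrest := card_filter_add_card_filter_le_of_subset hS
    (p := fun f => ∀ k, f k ≠ a) (q := fun f => f i ≠ a) fun f hf => hf i
  rw [card_filter_piFinset_const_forall_ne] at hrest
  have hbox := card_filter_piFinset_const_apply_ne_add (C := C) i ha
  have hfiber := card_filter_apply_eq_le hS hij ha
  simp only [ne_eq] at *
  omega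

end PiFinset

lemma three_mul_sub_two_mul_le {n d g : ℝ} (hn : 1 ≤ n) (hd : d ≤ 1)
    (h : d * n ^ 3 + (n - 1) ^ 3 + n ^ 2 ≤ (n - 1) ^ 3 * d + n * g + n ^ 3) :
    (3 * d - 2) * n ≤ g := by
  have hslack : 0 ≤ (3 * n - 1) * (1 - d) := by nlinarith
  have : n * ((3 * d - 2) * n) ≤ n * g := by nlinarith
  exact le_of_mul_le_mul_left this (by linarith)

lemma injective_vecCons_triple {α : Type*} :
    Function.Injective fun t : α × α × α => ![t.1, t.2.1, t.2.2] := fun _ _ h =>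
  Prod.ext (congrFun h 0) (Prod.ext (congrFun h 1) (congrFun h 2))

namespace Palette

variable {α : Type} [DecidableEq α] (P : Palette α)

def tuples : Finset (Fin 3 → α) :=
  P.triples.image fun t => ![t.1, t.2.1, t.2.2]

lemma card_tuples : #P.tuples = #P.triples :=
  card_image_of_injective _ injective_vecCons_triple

lemma tuples_subset_piFinset : P.tuples ⊆ piFinset fun _ => P.colors := by
  intro f hf
  obtain ⟨t, ht, rfl⟩ := mem_image.1 hf
  have ht' := P.triples_sub ht
  simp only [mem_product] at ht'
  simp [mem_piFinset, Fin.forall_fin_succ, ht']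

lemma card_filter_tuples_forall_ne (a : α) :
    #{f ∈ P.tuples | ∀ k, f k ≠ a} = #{t ∈ P.triples | t.1 ≠ a ∧ t.2.1 ≠ a ∧ t.2.2 ≠ a} := by
  rw [tuples, filter_image, card_image_of_injective _ injective_vecCons_triple]
  simp [Fin.forall_fin_succ]

lemma dGood_eq (i j : Fin 3) (a : α) :
    P.dGood i j a = #{b ∈ P.colors | ∃ f ∈ P.tuples, f i = a ∧ f j = b} := by
  unfold dGood
  congr 1
  exact filter_congr fun b _ => by simp [Good, tuples]

lemma density_le_one : P.density ≤ 1 := by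
  have hA : #P.triples ≤ #P.colors ^ 3 := by
    simpa [card_product, pow_three] using card_le_card P.triples_sub
  exact div_le_one_of_le₀ (by exact_mod_cast hA) (by positivity)

end Palette

/-- If removing the color `a` from the palette `P` does not increase the density,
then `d_{i,j}(a) ≥ (3·d(P) − 2)·n` for all `i ≠ j`. -/
theorem dGood_lower_bound {α : Type} [DecidableEq α] (P : Palette α)
    (a : α) (ha : a ∈ P.colors)
    (hrem : ((P.triples.filter fun t => t.1 ≠ a ∧ t.2.1 ≠ a ∧ t.2.2 ≠ a).card : ℝ) ≤
      ((P.colors.card : ℝ) - 1) ^ 3 * P.density) :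
    ∀ i j : Fin 3, i ≠ j →
      (3 * P.density - 2) * (P.colors.card : ℝ) ≤ (P.dGood i j a : ℝ) := by
  intro i j hij
  have hn : 0 < #P.colors := card_pos.2 ⟨a, ha⟩
  have hcount := card_add_le_of_subset_piFinset P.tuples_subset_piFinset hij ha
  -- `Fin 3` carries its own `Decidable (∀ k, _)` instance, distinct from the `Fintype` one.
  rw [filter_congr_decidable P.tuples (fun f => ∀ k, f k ≠ a), P.card_filter_tuples_forall_ne,
    P.card_tuples, ← P.dGood_eq, card_erase_of_mem ha, Fintype.card_fin] at hcount
  have hcountR : (#P.triples : ℝ) + (#P.colors - 1) ^ 3 + #P.colors ^ 2 ≤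
      #{t ∈ P.triples | t.1 ≠ a ∧ t.2.1 ≠ a ∧ t.2.2 ≠ a} + #P.colors * P.dGood i j a +
        #P.colors ^ 3 := by
    rw [← Nat.cast_pred hn]
    exact_mod_cast (by simpa only [Nat.reduceSub, pow_one] using hcount)
  have hdensity : P.density * #P.colors ^ 3 = #P.triples := div_mul_cancel₀ _ (by positivity)
  exact three_mul_sub_two_mul_le (by exact_mod_cast hn) P.density_le_one (by linarith)
end

section
/- For every palette P = (C, A) with |C| = n, the density satisfies d(P) ≤ 1/4 + (1/(2n)) · Σ_{a ∈ C} Σ_{(i,j): i ≠ j ∈ {1,2,3}} (e_{i,j}(a) − 1/2)², where the inner sum ranges over all six ordered pairs of distinct indices (i, j). -/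
/-- `e_{i,j}(a) = d_{i,j}(a)/n`. -/
noncomputable def Palette.eGood {α : Type} [DecidableEq α] (P : Palette α)
    (i j : Fin 3) (a : α) : ℝ :=
  (P.dGood i j a : ℝ) / (P.colors.card : ℝ)

open Finset Function

section TriangleBound

variable {α : Type*} (C : Finset α)

def rowSum (f : α → α → ℝ) (a : α) : ℝ := ∑ b ∈ C, f a b

def rowSpread (f : α → α → ℝ) (a : α) : ℝ := rowSum C f a * (#C - rowSum C f a)

lemma sum_rowSum_swap (f : α → α → ℝ) : ∑ a ∈ C, rowSum C (swap f) a = ∑ a ∈ C, rowSum C f a :=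
  sum_comm

lemma rowSpread_one_sub (f : α → α → ℝ) (a : α) :
    rowSpread C (fun a b => 1 - f a b) a = rowSpread C f a := by
  simp only [rowSpread, rowSum, sum_sub_distrib, sum_const, nsmul_one]
  ring

lemma one_sub_mul_one_sub_mul_one_sub_le {x y z : ℝ} (hx : 0 ≤ x) (hy : 0 ≤ y) (hz : 0 ≤ z) :
    (1 - x) * (1 - y) * (1 - z) ≤ 1 - x - y - z + x * y + x * z + y * z := by
  nlinarith [mul_nonneg (mul_nonneg hx hy) hz]

lemma sum_sum_sum_bonferroni_eq (x y z : α → α → ℝ) :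
    ∑ a ∈ C, ∑ b ∈ C, ∑ c ∈ C,
        (1 - x a b - y a c - z b c + x a b * y a c + x a b * z b c + y a c * z b c) =
      #C ^ 3 - #C * ∑ a ∈ C, (rowSum C x a + rowSum C y a + rowSum C z a) +
        ∑ a ∈ C, (rowSum C x a * rowSum C y a + rowSum C (swap x) a * rowSum C z a +
          rowSum C (swap y) a * rowSum C (swap z) a) := by
  have hxz : ∑ a ∈ C, ∑ b ∈ C, ∑ c ∈ C, x a b * z b c =
      ∑ b ∈ C, (∑ a ∈ C, x a b) * (∑ c ∈ C, z b c) := by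
    simp only [sum_mul_sum]; exact sum_comm
  have hyz : ∑ a ∈ C, ∑ b ∈ C, ∑ c ∈ C, y a c * z b c =
      ∑ c ∈ C, (∑ a ∈ C, y a c) * (∑ b ∈ C, z b c) := by
    simp only [sum_mul_sum]; exact sum_comm_cycle
  simp only [sum_add_distrib, sum_sub_distrib]
  rw [hxz, hyz]
  simp only [rowSum, swap, sum_mul_sum, sum_const, nsmul_eq_mul, ← mul_sum]
  ring

lemma sum_one_sub_mul_one_sub_mul_one_sub_add_half_sum_rowSpread_le (x y z : α → α → ℝ)
    (hx : ∀ a b, 0 ≤ x a b) (hy : ∀ a b, 0 ≤ y a b) (hz : ∀ a b, 0 ≤ z a b) :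
    ∑ a ∈ C, ∑ b ∈ C, ∑ c ∈ C, (1 - x a b) * (1 - y a c) * (1 - z b c) +
      1 / 2 * ∑ a ∈ C, (rowSpread C x a + rowSpread C (swap x) a + rowSpread C y a +
        rowSpread C (swap y) a + rowSpread C z a + rowSpread C (swap z) a) ≤ #C ^ 3 := by
  set n : ℝ := (#C : ℝ)
  -- AM-GM on the three products of row and column sums; the linear terms cancel
  have hpoint : ∀ a, rowSum C x a * rowSum C y a + rowSum C (swap x) a * rowSum C z a +
      rowSum C (swap y) a * rowSum C (swap z) a + 1 / 2 * (rowSpread C x a +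
        rowSpread C (swap x) a + rowSpread C y a + rowSpread C (swap y) a + rowSpread C z a +
        rowSpread C (swap z) a) ≤
      n / 2 * (rowSum C x a + rowSum C y a + rowSum C z a) +
        n / 2 * (rowSum C (swap x) a + rowSum C (swap y) a + rowSum C (swap z) a) := by
    intro a
    simp only [rowSpread]
    nlinarith [sq_nonneg (rowSum C x a - rowSum C y a),
      sq_nonneg (rowSum C (swap x) a - rowSum C z a),
      sq_nonneg (rowSum C (swap y) a - rowSum C (swap z) a)]
  have hsum := sum_le_sum fun a (_ : a ∈ C) => hpoint a
  simp only [sum_add_distrib, ← mul_sum, sum_rowSum_swap] at hsum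
  calc _ ≤ ∑ a ∈ C, ∑ b ∈ C, ∑ c ∈ C,
          (1 - x a b - y a c - z b c + x a b * y a c + x a b * z b c + y a c * z b c) +
        1 / 2 * ∑ a ∈ C, (rowSpread C x a + rowSpread C (swap x) a + rowSpread C y a +
          rowSpread C (swap y) a + rowSpread C z a + rowSpread C (swap z) a) := by
        gcongr with a _ b _ c _
        exact one_sub_mul_one_sub_mul_one_sub_le (hx a b) (hy a c) (hz b c)
    _ ≤ n ^ 3 := by
        rw [sum_sum_sum_bonferroni_eq]
        simp only [sum_add_distrib]
        linarith

theorem sum_mul_mul_add_half_sum_rowSpread_le (g₁ g₂ g₃ : α → α → ℝ)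
    (h₁ : ∀ a b, g₁ a b ≤ 1) (h₂ : ∀ a b, g₂ a b ≤ 1) (h₃ : ∀ a b, g₃ a b ≤ 1) :
    ∑ a ∈ C, ∑ b ∈ C, ∑ c ∈ C, g₁ a b * g₂ a c * g₃ b c +
      1 / 2 * ∑ a ∈ C, (rowSpread C g₁ a + rowSpread C (swap g₁) a + rowSpread C g₂ a +
        rowSpread C (swap g₂) a + rowSpread C g₃ a + rowSpread C (swap g₃) a) ≤ #C ^ 3 := by
  have := sum_one_sub_mul_one_sub_mul_one_sub_add_half_sum_rowSpread_le C
    (fun a b => 1 - g₁ a b) (fun a b => 1 - g₂ a b) (fun a b => 1 - g₃ a b)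
    (fun a b => sub_nonneg.2 (h₁ a b)) (fun a b => sub_nonneg.2 (h₂ a b))
    (fun a b => sub_nonneg.2 (h₃ a b))
  simpa only [sub_sub_cancel, rowSpread_one_sub] using this

end TriangleBound

lemma sum_filter_ne_fin_three {M : Type*} [AddCommMonoid M] (f : Fin 3 × Fin 3 → M) :
    ∑ p ∈ univ.filter (fun p : Fin 3 × Fin 3 => p.1 ≠ p.2), f p =
      f (0, 1) + f (1, 0) + f (0, 2) + f (2, 0) + f (1, 2) + f (2, 1) := by
  rw [show univ.filter (fun p : Fin 3 × Fin 3 => p.1 ≠ p.2) =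
    {(0, 1), (1, 0), (0, 2), (2, 0), (1, 2), (2, 1)} by decide]
  simp [add_assoc]

namespace Palette

variable {α : Type} [DecidableEq α] (P : Palette α)

def goodIndicator (i j : Fin 3) (a b : α) : ℝ := if P.Good i j a b then 1 else 0

lemma good_comm {i j : Fin 3} {a b : α} : P.Good i j a b ↔ P.Good j i b a :=
  exists_congr fun _ => and_congr_right' and_comm

lemma swap_goodIndicator (i j : Fin 3) : swap (P.goodIndicator i j) = P.goodIndicator j i := by
  ext a b
  simp only [swap, goodIndicator, P.good_comm (i := i)]

lemma goodIndicator_le_one (i j : Fin 3) (a b : α) : P.goodIndicator i j a b ≤ 1 := by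
  unfold goodIndicator; split_ifs <;> norm_num

lemma rowSpread_goodIndicator (i j : Fin 3) (a : α) :
    rowSpread P.colors (P.goodIndicator i j) a =
      (P.dGood i j a : ℝ) * (#P.colors - P.dGood i j a) := by
  simp only [rowSpread, rowSum, goodIndicator, dGood, natCast_card_filter]

lemma card_triples_le_sum_goodIndicator :
    (#P.triples : ℝ) ≤ ∑ a ∈ P.colors, ∑ b ∈ P.colors, ∑ c ∈ P.colors,
      P.goodIndicator 0 1 a b * P.goodIndicator 0 2 a c * P.goodIndicator 1 2 b c := by
  have hsub : P.triples ⊆ (P.colors ×ˢ P.colors ×ˢ P.colors).filter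
      fun t => P.Good 0 1 t.1 t.2.1 ∧ P.Good 0 2 t.1 t.2.2 ∧ P.Good 1 2 t.2.1 t.2.2 :=
    fun t ht => mem_filter.2 ⟨P.triples_sub ht, ⟨t, ht, rfl, rfl⟩, ⟨t, ht, rfl, rfl⟩,
      ⟨t, ht, rfl, rfl⟩⟩
  refine (Nat.cast_le.2 (card_le_card hsub)).trans_eq ?_
  simp only [natCast_card_filter, sum_product, goodIndicator, ite_zero_mul_ite_zero, and_assoc,
    mul_one]

lemma card_triples_add_half_sum_le :
    (#P.triples : ℝ) + 1 / 2 * ∑ a ∈ P.colors,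
      ∑ p ∈ univ.filter (fun p : Fin 3 × Fin 3 => p.1 ≠ p.2),
        (P.dGood p.1 p.2 a : ℝ) * (#P.colors - P.dGood p.1 p.2 a) ≤ #P.colors ^ 3 := by
  have := sum_mul_mul_add_half_sum_rowSpread_le P.colors (P.goodIndicator 0 1)
    (P.goodIndicator 0 2) (P.goodIndicator 1 2) (P.goodIndicator_le_one 0 1)
    (P.goodIndicator_le_one 0 2) (P.goodIndicator_le_one 1 2)
  simp only [swap_goodIndicator, rowSpread_goodIndicator] at this
  simp only [sum_filter_ne_fin_three]
  linarith [P.card_triples_le_sum_goodIndicator]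

lemma sum_sq_eGood_sub_half (a : α) :
    ∑ p ∈ univ.filter (fun p : Fin 3 × Fin 3 => p.1 ≠ p.2), (P.eGood p.1 p.2 a - 1 / 2) ^ 2 =
      3 / 2 - (∑ p ∈ univ.filter (fun p : Fin 3 × Fin 3 => p.1 ≠ p.2),
        (P.dGood p.1 p.2 a : ℝ) * (#P.colors - P.dGood p.1 p.2 a)) / #P.colors ^ 2 := by
  have hn : (#P.colors : ℝ) ≠ 0 := Nat.cast_ne_zero.2 P.nonempty.card_pos.ne'
  simp only [sum_filter_ne_fin_three, eGood]
  field_simp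
  ring

end Palette

/-- The density of any palette satisfies
`d(P) ≤ 1/4 + (1/(2n)) Σ_{a ∈ C} Σ_{i ≠ j} (e_{i,j}(a) − 1/2)²`. -/
theorem density_le_quarter_add_sum {α : Type} [DecidableEq α] (P : Palette α) :
    P.density ≤ 1 / 4 + 1 / (2 * (P.colors.card : ℝ)) *
      ∑ a ∈ P.colors,
        ∑ p ∈ Finset.univ.filter (fun p : Fin 3 × Fin 3 => p.1 ≠ p.2),
          (P.eGood p.1 p.2 a - 1 / 2) ^ 2 := by
  have hn : (0 : ℝ) < #P.colors := Nat.cast_pos.2 P.nonempty.card_pos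
  have key := P.card_triples_add_half_sum_le
  simp only [P.sum_sq_eGood_sub_half, sum_sub_distrib, sum_const, nsmul_eq_mul, ← sum_div]
  rw [Palette.density, div_le_iff₀ (by positivity)]
  field_simp
  linarith
end

section
/- Let P = (C, A) be a palette, let k = s + t with s, t ≥ 0, and suppose there exist colors ℓ₁, …, ℓ_s ∈ C and r₁, …, r_t ∈ C such that: (i) for all 1 ≤ i < j ≤ s there exists c ∈ C with (c, ℓ_i, ℓ_j) ∈ A; (ii) for all 1 ≤ i ≤ s and 1 ≤ j ≤ t there exists c ∈ C with (ℓ_i, c, r_j) ∈ A; and (iii) for all 1 ≤ i < j ≤ t there exists c ∈ C with (r_i, r_j, c) ∈ A. Then the k-star S_k admits P. -/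
/-- A 3-graph, given by its edge set `E` on vertex type `V`, admits the palette `P`
if there are a linear (strict total) order on the vertices and a coloring of the
unordered pairs of vertices such that every edge, listed in increasing order,
receives an admissible triple. -/
def Palette.Admits {α : Type} [DecidableEq α] {V : Type} [DecidableEq V]
    (P : Palette α) (E : Set (Finset V)) : Prop :=
  ∃ r : V → V → Prop, IsStrictTotalOrder V r ∧
    ∃ φ : Sym2 V → α, (∀ p, φ p ∈ P.colors) ∧
      ∀ u v w : V, r u v → r v w → ({u, v, w} : Finset V) ∈ E →
        (φ s(u, v), φ s(u, w), φ s(v, w)) ∈ P.triples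

/-!
Order the vertices of the star as `v₁, …, v_s, u, v_{s+1}, …, v_{s+t}`, colour the pair
`u v_i` by `ℓ_i` (for `i ≤ s`) or `r_{i-s}` (for `i > s`), and colour a pair of leaves by the
colour `c` that hypotheses (i)–(iii) provide for it. An edge `{u, v_i, v_j}`, read in increasing
order, then receives a triple of shape (i), (ii) or (iii), according to whether both, one or
none of its leaves lie before the centre.
-/

theorem Finset.Nonempty.exists_mem_imp {β : Type*} {s : Finset β} (hs : s.Nonempty) {p : Prop}
    {Q : β → Prop} (h : p → ∃ c ∈ s, Q c) : ∃ c ∈ s, p → Q c := by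
  by_cases hp : p
  · obtain ⟨c, hc, hQ⟩ := h hp
    exact ⟨c, hc, fun _ => hQ⟩
  · obtain ⟨c, hc⟩ := hs
    exact ⟨c, hc, fun h => absurd h hp⟩

namespace Palette

variable {α : Type} [DecidableEq α]

theorem admits_of_injective {V β : Type} [DecidableEq V] [LinearOrder β] (P : Palette α)
    (E : Set (Finset V)) (f : V → β) (hf : Function.Injective f) (ψ : V → V → α)
    (hψ : ∀ a b, ψ a b ∈ P.colors)
    (hE : ∀ u v w, f u < f v → f v < f w → ({u, v, w} : Finset V) ∈ E →
      (ψ u v, ψ u w, ψ v w) ∈ P.triples) :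
    P.Admits E := by
  let _ : LinearOrder V := LinearOrder.lift' f hf
  refine ⟨(· < ·), inferInstance, fun p => ψ p.inf p.sup, fun p => hψ _ _, ?_⟩
  intro u v w huv hvw he
  simp only [Sym2.inf_mk, Sym2.sup_mk, inf_of_le_left huv.le, sup_of_le_right huv.le,
    inf_of_le_left (huv.trans hvw).le, sup_of_le_right (huv.trans hvw).le,
    inf_of_le_left hvw.le, sup_of_le_right hvw.le]
  exact hE u v w huv hvw he

/-- The centre `0` is placed at position `p`, the leaf `i.succ` at position `p.succAbove i`;
`col i` colours the pair of the centre and `i.succ`, and `χ i j` the pair `i.succ, j.succ`. -/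
theorem admits_starEdges {k : ℕ} (P : Palette α) (p : Fin (k + 1)) (col : Fin k → α)
    (χ : Fin k → Fin k → α) (hcol : ∀ i, col i ∈ P.colors) (hχ : ∀ i j, χ i j ∈ P.colors)
    (hleft : ∀ i j, i < j → j.castSucc < p → (χ i j, col i, col j) ∈ P.triples)
    (hsplit : ∀ i j, i.castSucc < p → p ≤ j.castSucc → (col i, χ i j, col j) ∈ P.triples)
    (hright : ∀ i j, i < j → p ≤ i.castSucc → (col i, col j, χ i j) ∈ P.triples) :
    P.Admits (starEdges k) := by
  obtain ⟨c₀, hc₀⟩ := P.nonempty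
  let pos : Fin (k + 1) → Fin (k + 1) := Fin.cons p p.succAbove
  have pos_injective : Function.Injective pos :=
    Fin.cons_injective_iff.2
      ⟨fun ⟨i, hi⟩ => Fin.succAbove_ne p i hi, Fin.succAbove_right_injective⟩
  refine admits_of_injective P _ pos pos_injective
    (fun u v => Fin.cases (Fin.cases c₀ col v) (fun i => Fin.cases (col i) (χ i) v) u) ?_ ?_
  · intro u v
    cases u using Fin.cases <;> cases v using Fin.cases <;> simp [hc₀, hcol, hχ]
  · rintro u v w huv hvw ⟨i, j, -, he⟩
    have h0 : (0 : Fin (k + 1)) ∈ ({u, v, w} : Finset _) := he ▸ by simp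
    simp only [Finset.mem_insert, Finset.mem_singleton] at h0
    rcases h0 with rfl | rfl | rfl
    · obtain ⟨i, rfl⟩ := Fin.exists_succ_eq.2 (pos_injective.ne_iff.1 huv.ne')
      obtain ⟨j, rfl⟩ := Fin.exists_succ_eq.2 (pos_injective.ne_iff.1 (huv.trans hvw).ne')
      simp only [pos, Fin.cons_zero, Fin.cons_succ, Fin.lt_succAbove_iff_le_castSucc,
        Fin.succAbove_lt_succAbove_iff] at huv hvw
      simpa using hright i j hvw huv
    · obtain ⟨i, rfl⟩ := Fin.exists_succ_eq.2 (pos_injective.ne_iff.1 huv.ne)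
      obtain ⟨j, rfl⟩ := Fin.exists_succ_eq.2 (pos_injective.ne_iff.1 hvw.ne')
      simp only [pos, Fin.cons_zero, Fin.cons_succ, Fin.lt_succAbove_iff_le_castSucc,
        Fin.succAbove_lt_iff_castSucc_lt] at huv hvw
      simpa using hsplit i j huv hvw
    · obtain ⟨i, rfl⟩ := Fin.exists_succ_eq.2 (pos_injective.ne_iff.1 (huv.trans hvw).ne)
      obtain ⟨j, rfl⟩ := Fin.exists_succ_eq.2 (pos_injective.ne_iff.1 hvw.ne)
      simp only [pos, Fin.cons_zero, Fin.cons_succ, Fin.succAbove_lt_iff_castSucc_lt,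
        Fin.succAbove_lt_succAbove_iff] at huv hvw
      simpa using hleft i j huv hvw

theorem admits_starEdges_add {s t : ℕ} (P : Palette α) (ℓ : Fin s → α) (r : Fin t → α)
    (cℓ : Fin s → Fin s → α) (cℓr : Fin s → Fin t → α) (cr : Fin t → Fin t → α)
    (hℓ : ∀ i, ℓ i ∈ P.colors) (hr : ∀ i, r i ∈ P.colors) (hcℓ : ∀ i j, cℓ i j ∈ P.colors)
    (hcℓr : ∀ i j, cℓr i j ∈ P.colors) (hcr : ∀ i j, cr i j ∈ P.colors)
    (hℓℓ : ∀ i j, i < j → (cℓ i j, ℓ i, ℓ j) ∈ P.triples)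
    (hℓr : ∀ i j, (ℓ i, cℓr i j, r j) ∈ P.triples)
    (hrr : ∀ i j, i < j → (r i, r j, cr i j) ∈ P.triples) :
    P.Admits (starEdges (s + t)) := by
  obtain ⟨c₀, hc₀⟩ := P.nonempty
  refine P.admits_starEdges ⟨s, by omega⟩ (Fin.append ℓ r)
    (Fin.addCases (fun i => Fin.addCases (cℓ i) (cℓr i))
      (fun i => Fin.addCases (fun _ => c₀) (cr i))) ?_ ?_ ?_ ?_ ?_
  · intro i
    cases i using Fin.addCases <;> simp [hℓ, hr]
  · intro i j
    cases i using Fin.addCases <;> cases j using Fin.addCases <;> simp [hcℓ, hcℓr, hcr, hc₀]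
  · intro i j hij hj
    cases i using Fin.addCases <;> cases j using Fin.addCases
    all_goals simp [Fin.lt_def, -Fin.val_fin_lt] at hij hj ⊢
    all_goals first | omega | exact hℓℓ _ _ (Fin.lt_def.2 hij)
  · intro i j hi hj
    cases i using Fin.addCases <;> cases j using Fin.addCases
    all_goals simp [Fin.lt_def, Fin.le_def, -Fin.val_fin_lt, -Fin.val_fin_le] at hi hj ⊢
    all_goals first | omega | exact hℓr _ _
  · intro i j hij hi
    cases i using Fin.addCases <;> cases j using Fin.addCases
    all_goals simp [Fin.lt_def, Fin.le_def, -Fin.val_fin_lt, -Fin.val_fin_le] at hij hi ⊢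
    all_goals first | omega | exact hrr _ _ (Fin.lt_def.2 hij)

end Palette

/-- If there are colors `ℓ₁, …, ℓ_s` and `r₁, …, r_t` such that every pair
`(ℓ_i, ℓ_j)` (`i < j`) extends to an admissible triple `(c, ℓ_i, ℓ_j)`, every pair
`(ℓ_i, r_j)` extends to an admissible triple `(ℓ_i, c, r_j)`, and every pair
`(r_i, r_j)` (`i < j`) extends to an admissible triple `(r_i, r_j, c)`, then the
`(s + t)`-star admits the palette. -/
theorem star_admits_of_tournament {α : Type} [DecidableEq α] (P : Palette α)
    (s t : ℕ) (ℓ : Fin s → α) (r : Fin t → α)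
    (hℓ : ∀ i, ℓ i ∈ P.colors) (hr : ∀ i, r i ∈ P.colors)
    (h1 : ∀ i j : Fin s, i < j → ∃ c ∈ P.colors, (c, ℓ i, ℓ j) ∈ P.triples)
    (h2 : ∀ (i : Fin s) (j : Fin t), ∃ c ∈ P.colors, (ℓ i, c, r j) ∈ P.triples)
    (h3 : ∀ i j : Fin t, i < j → ∃ c ∈ P.colors, (r i, r j, c) ∈ P.triples) :
    P.Admits (starEdges (s + t)) := by
  choose cℓ hcℓ hℓℓ using fun i j => P.nonempty.exists_mem_imp (h1 i j)
  choose cℓr hcℓr hℓr using h2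
  choose cr hcr hrr using fun i j => P.nonempty.exists_mem_imp (h3 i j)
  exact P.admits_starEdges_add ℓ r cℓ cℓr cr hℓ hr hcℓ hcℓr hcr hℓℓ hℓr hrr
end

section
/- Let k ≥ 2 be an integer and let H be a digraph on a finite vertex set V with |V| = n, i.e., an irreflexive binary relation E on V. Suppose H contains no transitive tournament on k vertices, that is, there do not exist distinct vertices w₁, …, w_k with an arc from w_i to w_j for all 1 ≤ i < j ≤ k. For each vertex v let m(v) = max(d⁺(v), d⁻(v)), where d⁺(v) = |{w : (v,w) ∈ E}| and d⁻(v) = |{w : (w,v) ∈ E}|. Then Σ_{v ∈ V} 1/(n − m(v)) ≤ k − 1. -/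
/-!
Induction on `k`. Let `v₀` maximise `m`, and let `N` be its larger neighbourhood, so `|N| = m(v₀)`.
The `n - m(v₀)` vertices outside `N` contribute at most `1 / (n - m(v₀))` each, hence at most `1`
in total. A vertex `u ∈ N` loses at most `n - |N|` neighbours when we pass to the digraph induced
on `N`, so its term is bounded by the corresponding term for that digraph; and the induced digraph
has no transitive tournament on `k - 1` vertices, since `v₀` would extend one. Reversing all arcs
preserves `m` and transitive tournaments, so the in-neighbourhood case reduces to the out-one.
-/

open Finset

namespace Relation

section Tournament

variable {V : Type*} (E : V → V → Prop)

def HasTransitiveTournament (k : ℕ) : Prop :=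
  ∃ w : Fin k → V, Function.Injective w ∧ ∀ i j : Fin k, i < j → E (w i) (w j)

def induce (N : Finset V) : N → N → Prop := fun a b => E a b

instance [DecidableRel E] : DecidableRel (flip E) := fun a b => ‹DecidableRel E› b a

instance [DecidableRel E] (N : Finset V) : DecidableRel (induce E N) :=
  fun a b => ‹DecidableRel E› a b

variable {E}

lemma HasTransitiveTournament.flip {k : ℕ} (h : HasTransitiveTournament E k) :
    HasTransitiveTournament (flip E) k := by
  obtain ⟨w, hinj, hE⟩ := h
  exact ⟨w ∘ Fin.rev, hinj.comp Fin.rev_injective,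
    fun i j hij => hE _ _ (Fin.rev_lt_rev.mpr hij)⟩

lemma HasTransitiveTournament.cons {k : ℕ} {N : Finset V} {v : V}
    (h : HasTransitiveTournament (induce E N) k) (hv : v ∉ N) (hvN : ∀ u ∈ N, E v u) :
    HasTransitiveTournament E (k + 1) := by
  obtain ⟨w, hinj, hE⟩ := h
  refine ⟨Fin.cons v (Subtype.val ∘ w), ?_, fun i j hij => ?_⟩
  · refine Fin.cons_injective_iff.mpr ⟨?_, Subtype.val_injective.comp hinj⟩
    rintro ⟨i, rfl⟩
    exact hv (w i).2
  · induction j using Fin.cases with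
    | zero => exact absurd hij (Fin.not_lt_zero i)
    | succ j =>
      induction i using Fin.cases with
      | zero => exact hvN _ (w j).2
      | succ i => exact hE i j (Fin.succ_lt_succ_iff.mp hij)

end Tournament

variable {V : Type*} [Fintype V] (E : V → V → Prop) [DecidableRel E]

def outDeg (v : V) : ℕ := #(univ.filter fun u => E v u)

def maxDeg (v : V) : ℕ := max (outDeg E v) (outDeg (flip E) v)

noncomputable def caroWeiSum : ℝ := ∑ v, 1 / ((Fintype.card V : ℝ) - maxDeg E v)

variable {E}

lemma outDeg_lt_card (hirr : ∀ v, ¬ E v v) (v : V) : outDeg E v < Fintype.card V :=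
  card_lt_univ_of_notMem (x := v) (by simpa using hirr v)

lemma maxDeg_lt_card (hirr : ∀ v, ¬ E v v) (v : V) : maxDeg E v < Fintype.card V :=
  max_lt (outDeg_lt_card hirr v) (outDeg_lt_card (E := flip E) hirr v)

lemma outDeg_le_outDeg_induce_add [DecidableEq V] (N : Finset V) (u : N) :
    outDeg E u ≤ outDeg (induce E N) u + #Nᶜ := by
  have hN : outDeg (induce E N) u = #(N.filter (E u)) := by
    rw [outDeg, card_filter, card_filter, ← sum_coe_sort N]
    rfl
  rw [hN, outDeg]
  calc #(univ.filter (E u)) ≤ #(univ.filter (E u) \ Nᶜ) + #Nᶜ := card_le_card_sdiff_add_card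
    _ ≤ #(N.filter (E u)) + #Nᶜ := by
      gcongr
      intro x
      simp +contextual

lemma maxDeg_le_maxDeg_induce_add [DecidableEq V] (N : Finset V) (u : N) :
    maxDeg E u ≤ maxDeg (induce E N) u + #Nᶜ := by
  rw [maxDeg, maxDeg, ← max_add_add_right]
  exact max_le_max (outDeg_le_outDeg_induce_add N u)
    (outDeg_le_outDeg_induce_add (E := flip E) N u)

lemma caroWeiSum_le_one_add_induce (hirr : ∀ v, ¬ E v v) {v₀ : V}
    (hmax : ∀ u, maxDeg E u ≤ maxDeg E v₀) (N : Finset V) (hN : #N = maxDeg E v₀) :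
    caroWeiSum E ≤ 1 + caroWeiSum (induce E N) := by
  classical
  set n := Fintype.card V
  have hcompl : (#Nᶜ : ℝ) = n - #N := by rw [card_compl, Nat.cast_sub (card_le_univ N)]
  have hv₀ : (maxDeg E v₀ : ℝ) < n := by exact_mod_cast maxDeg_lt_card hirr v₀
  have houtside : ∑ v ∈ Nᶜ, 1 / ((n : ℝ) - maxDeg E v) ≤ 1 := calc
    ∑ v ∈ Nᶜ, 1 / ((n : ℝ) - maxDeg E v) ≤ ∑ _v ∈ Nᶜ, 1 / ((n : ℝ) - maxDeg E v₀) := by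
      refine sum_le_sum fun v _ => one_div_le_one_div_of_le (by linarith) ?_
      have : (maxDeg E v : ℝ) ≤ maxDeg E v₀ := by exact_mod_cast hmax v
      linarith
    _ = 1 := by rw [sum_const, nsmul_eq_mul, hcompl, hN, mul_one_div_cancel (by linarith)]
  have hinside : ∑ v ∈ N, 1 / ((n : ℝ) - maxDeg E v) ≤ caroWeiSum (induce E N) := by
    rw [← sum_coe_sort N, caroWeiSum, Fintype.card_coe]
    refine sum_le_sum fun u _ => one_div_le_one_div_of_le ?_ ?_
    · have := maxDeg_lt_card (E := induce E N) (fun a => hirr a) u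
      rw [Fintype.card_coe] at this
      exact sub_pos.mpr (by exact_mod_cast this)
    · have : (maxDeg E u : ℝ) ≤ maxDeg (induce E N) u + #Nᶜ := by
        exact_mod_cast maxDeg_le_maxDeg_induce_add N u
      linarith
  rw [caroWeiSum, ← sum_add_sum_compl N]
  linarith

theorem caroWeiSum_le {k : ℕ} (hirr : ∀ v, ¬ E v v) (hno : ¬ HasTransitiveTournament E k) :
    caroWeiSum E ≤ k - 1 := by
  induction k generalizing V with
  | zero => exact absurd ⟨Fin.elim0, Function.injective_of_subsingleton _, nofun⟩ hno
  | succ k ih =>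
    cases isEmpty_or_nonempty V
    · simp [caroWeiSum]
    obtain ⟨v₀, hmax⟩ := Finite.exists_max (maxDeg E)
    have step (N : Finset V) (hN : #N = maxDeg E v₀)
        (hext : HasTransitiveTournament (induce E N) k → HasTransitiveTournament E (k + 1)) :
        caroWeiSum E ≤ (k + 1 : ℕ) - 1 := by
      have := caroWeiSum_le_one_add_induce hirr hmax N hN
      have := ih (E := induce E N) (fun a => hirr a) (mt hext hno)
      push_cast
      linarith
    rcases le_total (outDeg (flip E) v₀) (outDeg E v₀) with hout | hin
    · exact step _ (max_eq_left hout).symm fun h =>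
        h.cons (fun hv => hirr v₀ (mem_filter.mp hv).2) fun _ hu => (mem_filter.mp hu).2
    · exact step _ (max_eq_right hin).symm fun h =>
        (h.flip.cons (E := flip E) (fun hv => hirr v₀ (mem_filter.mp hv).2)
          fun _ hu => (mem_filter.mp hu).2).flip

end Relation

open Relation in
theorem digraph_caro_wei_general {V : Type} [Fintype V]
    (k : ℕ) (E : V → V → Prop) [DecidableRel E]
    (hirr : ∀ v, ¬ E v v)
    (hno : ¬ ∃ w : Fin k → V, Function.Injective w ∧
      ∀ i j : Fin k, i < j → E (w i) (w j)) :
    ∑ v : V, (1 : ℝ) /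
        ((Fintype.card V : ℝ) -
          (max ((Finset.univ.filter fun u => E v u).card)
               ((Finset.univ.filter fun u => E u v).card) : ℕ)) ≤
      (k : ℝ) - 1 :=
  caroWeiSum_le hirr hno

/-- Caro–Wei-type bound for digraphs: if a digraph (an irreflexive relation `E`
on a finite vertex set `V` of size `n`) contains no transitive tournament on `k`
vertices, then `Σ_v 1/(n − m(v)) ≤ k − 1`, where `m(v)` is the maximum of the
out-degree and the in-degree of `v`. -/
theorem digraph_caro_wei {V : Type} [Fintype V] [DecidableEq V]
    (k : ℕ) (hk : 2 ≤ k) (E : V → V → Prop) [DecidableRel E]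
    (hirr : ∀ v, ¬ E v v)
    (hno : ¬ ∃ w : Fin k → V, Function.Injective w ∧
      ∀ i j : Fin k, i < j → E (w i) (w j)) :
    ∑ v : V, (1 : ℝ) /
        ((Fintype.card V : ℝ) -
          (max ((Finset.univ.filter fun u => E v u).card)
               ((Finset.univ.filter fun u => E u v).card) : ℕ)) ≤
      (k : ℝ) - 1 :=
  digraph_caro_wei_general k E hirr hno
end

section
/- Let k ≥ 4 be an integer and define f₁(x) = 5/x² − (k+7)/((k−1)x) + 4/(k−1)² + 1/4. Then for every real number x ≥ 5(k−1)/(k−3), one has f₁(x) ≤ (k−3)x/(k−1)³ + (k² − 10k + 21)/(2k−2)². -/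
/-!
The right-hand side is the tangent line to `f₁` at `x = k − 1`: the gap between them factors as
`((k − 3)x − 5(k − 1)) (x − (k − 1))² / (x² (k − 1)³)`, with a double root at the point of tangency,
and the remaining linear factor is nonnegative exactly when `x ≥ 5(k − 1)/(k − 3)`.
-/

lemma f1_tangent_gap_eq (c x : ℝ) (hc : c ≠ 1) (hx : x ≠ 0) :
    ((c - 3) * x / (c - 1) ^ 3 + (c ^ 2 - 10 * c + 21) / (2 * c - 2) ^ 2) -
        (5 / x ^ 2 - (c + 7) / ((c - 1) * x) + 4 / (c - 1) ^ 2 + 1 / 4) =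
      ((c - 3) * x - 5 * (c - 1)) * (x - (c - 1)) ^ 2 / (x ^ 2 * (c - 1) ^ 3) := by
  have hc1 : c - 1 ≠ 0 := sub_ne_zero.mpr hc
  have hc2 : 2 * c - 2 ≠ 0 := by
    rw [show 2 * c - 2 = 2 * (c - 1) by ring]
    exact mul_ne_zero two_ne_zero hc1
  field_simp
  ring

lemma f1_le_tangent (c x : ℝ) (hc : 3 < c) (hx : 5 * (c - 1) / (c - 3) ≤ x) :
    5 / x ^ 2 - (c + 7) / ((c - 1) * x) + 4 / (c - 1) ^ 2 + 1 / 4 ≤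
      (c - 3) * x / (c - 1) ^ 3 + (c ^ 2 - 10 * c + 21) / (2 * c - 2) ^ 2 := by
  have hc3 : 0 < c - 3 := sub_pos.mpr hc
  have hc1 : 0 < c - 1 := by linarith
  have hx_pos : 0 < x := (div_pos (by linarith) hc3).trans_le hx
  have hx_factor : 0 ≤ (c - 3) * x - 5 * (c - 1) := by
    rw [div_le_iff₀ hc3] at hx
    linarith
  rw [← sub_nonneg, f1_tangent_gap_eq c x (by linarith : 1 < c).ne' hx_pos.ne']
  exact div_nonneg (mul_nonneg hx_factor (sq_nonneg _)) (by positivity)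

/-- Tangent-type local inequality for
`f₁(x) = 5/x² − (k+7)/((k−1)x) + 4/(k−1)² + 1/4`: for all `x ≥ 5(k−1)/(k−3)`,
`f₁(x) ≤ (k−3)x/(k−1)³ + (k² − 10k + 21)/(2k−2)²`. -/
theorem f1_tangent_bound (k : ℕ) (hk : 4 ≤ k) (x : ℝ)
    (hx : 5 * ((k : ℝ) - 1) / ((k : ℝ) - 3) ≤ x) :
    5 / x ^ 2 - ((k : ℝ) + 7) / (((k : ℝ) - 1) * x) + 4 / ((k : ℝ) - 1) ^ 2 + 1 / 4 ≤
      ((k : ℝ) - 3) * x / ((k : ℝ) - 1) ^ 3 +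
        ((k : ℝ) ^ 2 - 10 * k + 21) / (2 * (k : ℝ) - 2) ^ 2 := by
  have hk3 : (3 : ℝ) < k := by exact_mod_cast hk
  exact f1_le_tangent k x hk3 hx
end
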